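/- Let (D,F = (f₁,f₂)) be a valid tight pair that is not a hard pair and such that D is biconnected. If the pair does not satisfy property (E), then D is F-dicolourable. -/

import Mathlib

open scoped Classical

/-- A finite digraph with vertex set a `Finset ℕ` and no loops.
Both arcs `(u,v)` and `(v,u)` may be present (a digon). -/
structure Digraph' where
  verts : Finset ℕ
  arcs : Finset (ℕ × ℕ)
  mem_fst : ∀ a ∈ arcs, a.1 ∈ verts
  mem_snd : ∀ a ∈ arcs, a.2 ∈ verts
  no_loops : ∀ a ∈ arcs, a.1 ≠ a.2

namespace Digraph'

/-- In-degree of `v`. -/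
def inDeg (D : Digraph') (v : ℕ) : ℕ := (D.arcs.filter fun a => a.2 = v).card

/-- Out-degree of `v`. -/
def outDeg (D : Digraph') (v : ℕ) : ℕ := (D.arcs.filter fun a => a.1 = v).card

/-- In-neighbourhood of `v`. -/
def inNbrs (D : Digraph') (v : ℕ) : Finset ℕ := (D.arcs.filter fun a => a.2 = v).image Prod.fst

/-- Out-neighbourhood of `v`. -/
def outNbrs (D : Digraph') (v : ℕ) : Finset ℕ := (D.arcs.filter fun a => a.1 = v).image Prod.snd

/-- Neighbourhood of `v` in the underlying graph. -/
def ugNbrs (D : Digraph') (v : ℕ) : Finset ℕ := D.inNbrs v ∪ D.outNbrs v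

/-- `H` is a subdigraph of `D`. -/
def IsSubdigraph (H D : Digraph') : Prop := H.verts ⊆ D.verts ∧ H.arcs ⊆ D.arcs

/-- The subdigraph of `D` induced by the vertex set `X`. -/
def induce (D : Digraph') (X : Finset ℕ) : Digraph' where
  verts := D.verts ∩ X
  arcs := D.arcs.filter fun a => a.1 ∈ X ∧ a.2 ∈ X
  mem_fst := fun a ha => by
    simp only [Finset.mem_filter] at ha
    exact Finset.mem_inter.mpr ⟨D.mem_fst a ha.1, ha.2.1⟩
  mem_snd := fun a ha => by
    simp only [Finset.mem_filter] at ha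
    exact Finset.mem_inter.mpr ⟨D.mem_snd a ha.1, ha.2.2⟩
  no_loops := fun a ha => by
    simp only [Finset.mem_filter] at ha
    exact D.no_loops a ha.1

/-- `D − X`, the digraph obtained from `D` by deleting the vertices of `X`. -/
def del (D : Digraph') (X : Finset ℕ) : Digraph' := D.induce (D.verts \ X)

/-- Adjacency in the underlying graph of `D`. -/
def ugAdj (D : Digraph') (u v : ℕ) : Prop :=
  u ∈ D.verts ∧ v ∈ D.verts ∧ ((u, v) ∈ D.arcs ∨ (v, u) ∈ D.arcs)

/-- `D` is connected, i.e. its underlying graph is connected. -/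
def Connected (D : Digraph') : Prop :=
  D.verts.Nonempty ∧ ∀ u ∈ D.verts, ∀ v ∈ D.verts, Relation.ReflTransGen D.ugAdj u v

/-- `D` is biconnected: it has at least two vertices, is connected, and stays
connected after the deletion of any vertex. -/
def Biconnected (D : Digraph') : Prop :=
  2 ≤ D.verts.card ∧ D.Connected ∧ ∀ x ∈ D.verts, (D.del {x}).Connected

/-- Every arc of `D` lies in a digon. -/
def Bidirected (D : Digraph') : Prop := ∀ a ∈ D.arcs, (a.2, a.1) ∈ D.arcs

/-- The underlying graph of `D` is a cycle. -/
def IsCycleUG (D : Digraph') : Prop :=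
  D.Connected ∧ ∀ v ∈ D.verts, (D.ugNbrs v).card = 2

/-- `D` is a bidirected odd cycle. -/
def BidirectedOddCycle (D : Digraph') : Prop :=
  D.Bidirected ∧ D.IsCycleUG ∧ Odd D.verts.card

/-- `D` is a bidirected complete graph. -/
def BidirectedComplete (D : Digraph') : Prop :=
  ∀ u ∈ D.verts, ∀ v ∈ D.verts, u ≠ v → (u, v) ∈ D.arcs

/-- `D` is strictly-`f`-bidegenerate: every nonempty subdigraph `H` of `D` contains a
vertex `v` with `d⁻_H(v) < f⁻(v)` or `d⁺_H(v) < f⁺(v)`. -/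
def StrictlyBidegenerate (D : Digraph') (f : ℕ → ℕ × ℕ) : Prop :=
  ∀ H : Digraph', H.IsSubdigraph D → H.verts.Nonempty →
    ∃ v ∈ H.verts, H.inDeg v < (f v).1 ∨ H.outDeg v < (f v).2

/-- `α` is an `F`-dicolouring of `D`: for each colour `i`, the subdigraph induced by the
vertices coloured `i` is strictly-`Fᵢ`-bidegenerate. -/
def IsDicolouring (D : Digraph') (s : ℕ) (F : Fin s → ℕ → ℕ × ℕ) (α : ℕ → Fin s) : Prop :=
  ∀ i : Fin s, (D.induce (D.verts.filter fun v => α v = i)).StrictlyBidegenerate (F i)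

/-- `D` is `F`-dicolourable. -/
def Dicolourable (D : Digraph') (s : ℕ) (F : Fin s → ℕ → ℕ × ℕ) : Prop :=
  ∃ α : ℕ → Fin s, D.IsDicolouring s F α

/-- `(D,F)` is a valid pair: `D` is connected and the colour budget dominates the
in- and out-degrees at every vertex. -/
def ValidPair (D : Digraph') (s : ℕ) (F : Fin s → ℕ → ℕ × ℕ) : Prop :=
  D.Connected ∧ ∀ v ∈ D.verts,
    D.inDeg v ≤ ∑ i, (F i v).1 ∧ D.outDeg v ≤ ∑ i, (F i v).2

/-- `(D,F)` is tight: both budget inequalities are equalities at every vertex. -/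
def Tight (D : Digraph') (s : ℕ) (F : Fin s → ℕ → ℕ × ℕ) : Prop :=
  ∀ v ∈ D.verts, ∑ i, (F i v).1 = D.inDeg v ∧ ∑ i, (F i v).2 = D.outDeg v

/-- Hard pairs, defined inductively: monochromatic, bicycle, complete, and join hard pairs. -/
inductive IsHardPair : (s : ℕ) → Digraph' → (Fin s → ℕ → ℕ × ℕ) → Prop
  | mono {s : ℕ} {D : Digraph'} {F : Fin s → ℕ → ℕ × ℕ} (i : Fin s)
      (hbi : D.Biconnected)
      (hi : ∀ v ∈ D.verts, F i v = (D.inDeg v, D.outDeg v))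
      (hk : ∀ k : Fin s, k ≠ i → ∀ v ∈ D.verts, F k v = (0, 0)) :
      IsHardPair s D F
  | bicycle {s : ℕ} {D : Digraph'} {F : Fin s → ℕ → ℕ × ℕ} (i j : Fin s) (hij : i ≠ j)
      (hD : D.BidirectedOddCycle)
      (hi : ∀ v ∈ D.verts, F i v = (1, 1))
      (hj : ∀ v ∈ D.verts, F j v = (1, 1))
      (hk : ∀ k : Fin s, k ≠ i → k ≠ j → ∀ v ∈ D.verts, F k v = (0, 0)) :
      IsHardPair s D F
  | complete {s : ℕ} {D : Digraph'} {F : Fin s → ℕ → ℕ × ℕ}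
      (hD : D.BidirectedComplete)
      (hconst : ∀ k : Fin s, ∀ u ∈ D.verts, ∀ v ∈ D.verts, F k u = F k v)
      (hsym : ∀ k : Fin s, ∀ v ∈ D.verts, (F k v).1 = (F k v).2)
      (hsum : ∀ v ∈ D.verts, ∑ k, (F k v).2 = D.verts.card - 1) :
      IsHardPair s D F
  | join {s : ℕ} {D : Digraph'} {F : Fin s → ℕ → ℕ × ℕ}
      (D₁ D₂ : Digraph') (F₁ F₂ : Fin s → ℕ → ℕ × ℕ) (x : ℕ)
      (h₁ : IsHardPair s D₁ F₁) (h₂ : IsHardPair s D₂ F₂)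
      (hx : D₁.verts ∩ D₂.verts = {x})
      (hV : D.verts = D₁.verts ∪ D₂.verts)
      (hA : D.arcs = D₁.arcs ∪ D₂.arcs)
      (hF₁ : ∀ k : Fin s, ∀ v ∈ D₁.verts, v ≠ x → F k v = F₁ k v)
      (hF₂ : ∀ k : Fin s, ∀ v ∈ D₂.verts, v ≠ x → F k v = F₂ k v)
      (hFx : ∀ k : Fin s, F k x = ((F₁ k x).1 + (F₂ k x).1, (F₁ k x).2 + (F₂ k x).2)) :
      IsHardPair s D F

/-- The sequence of functions of the pair reduced from `(D,F)` by a colouring `α` of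
`X ⊆ V(D)`: the budget of colour `i` at `u` decreases by the number of in- and out-neighbours
of `u` inside `X` coloured `i` (truncated at `0`). -/
def reduceF (D : Digraph') {s : ℕ} (F : Fin s → ℕ → ℕ × ℕ) (X : Finset ℕ) (α : ℕ → Fin s) :
    Fin s → ℕ → ℕ × ℕ :=
  fun i u =>
    ((F i u).1 - ((D.inNbrs u ∩ X).filter fun w => α w = i).card,
     (F i u).2 - ((D.outNbrs u ∩ X).filter fun w => α w = i).card)

/-- `B` is a block of `D`: a maximal biconnected subdigraph. -/
def IsBlock (B D : Digraph') : Prop :=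
  B.IsSubdigraph D ∧ B.Biconnected ∧
    ∀ B' : Digraph', B'.IsSubdigraph D → B'.Biconnected → B.IsSubdigraph B' → B' = B

/-- `x` is a cut-vertex of `D`: `D − x` is disconnected. -/
def CutVertex (D : Digraph') (x : ℕ) : Prop :=
  x ∈ D.verts ∧ (D.del {x}).verts.Nonempty ∧ ¬ (D.del {x}).Connected

/-- `B` is an end-block of `D` whose unique cut-vertex (of `D`) in `B` is `x`. -/
def IsEndBlockAt (B D : Digraph') (x : ℕ) : Prop :=
  IsBlock B D ∧ x ∈ B.verts ∧ D.CutVertex x ∧ ∀ y ∈ B.verts, D.CutVertex y → y = x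

/-- `B` is a monochromatic hard end-block with cut-vertex `x`, for colour `c`. -/
def MonoHardEndBlock {s : ℕ} (F : Fin s → ℕ → ℕ × ℕ) (B : Digraph') (x : ℕ) (c : Fin s) : Prop :=
  B.inDeg x ≤ (F c x).1 ∧ B.outDeg x ≤ (F c x).2 ∧
    ∀ v ∈ B.verts, v ≠ x →
      F c v = (B.inDeg v, B.outDeg v) ∧ ∀ k : Fin s, k ≠ c → F k v = (0, 0)

/-- `B` is a bicycle hard end-block with cut-vertex `x`. -/
def BicycleHardEndBlock {s : ℕ} (F : Fin s → ℕ → ℕ × ℕ) (B : Digraph') (x : ℕ) : Prop :=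
  B.BidirectedOddCycle ∧
    ∃ i j : Fin s, i ≠ j ∧
      1 ≤ (F i x).1 ∧ 1 ≤ (F i x).2 ∧ 1 ≤ (F j x).1 ∧ 1 ≤ (F j x).2 ∧
      ∀ v ∈ B.verts, v ≠ x →
        F i v = (1, 1) ∧ F j v = (1, 1) ∧ ∀ k : Fin s, k ≠ i → k ≠ j → F k v = (0, 0)

/-- `B` is a complete hard end-block with cut-vertex `x`. -/
def CompleteHardEndBlock {s : ℕ} (F : Fin s → ℕ → ℕ × ℕ) (B : Digraph') (x : ℕ) : Prop :=
  B.BidirectedComplete ∧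
    (∀ k : Fin s, ∀ u ∈ B.verts, u ≠ x → ∀ v ∈ B.verts, v ≠ x → F k u = F k v) ∧
    (∀ k : Fin s, ∀ v ∈ B.verts, v ≠ x → (F k v).1 = (F k v).2) ∧
    (∀ k : Fin s, ∀ u ∈ B.verts, u ≠ x → (F k u).1 ≤ (F k x).1 ∧ (F k u).2 ≤ (F k x).2)

/-- `B` is a hard end-block with cut-vertex `x`. -/
def HardEndBlock {s : ℕ} (F : Fin s → ℕ → ℕ × ℕ) (B : Digraph') (x : ℕ) : Prop :=
  (∃ c : Fin s, MonoHardEndBlock F B x c) ∨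
    BicycleHardEndBlock F B x ∨ CompleteHardEndBlock F B x

/-- `(D',F')` is the contraction of `(D,F)` with respect to the hard end-block `B` with
cut-vertex `x`, where `u` is a vertex of `B` other than `x`. -/
def IsContraction (D : Digraph') {s : ℕ} (F : Fin s → ℕ → ℕ × ℕ) (B : Digraph') (x u : ℕ)
    (D' : Digraph') (F' : Fin s → ℕ → ℕ × ℕ) : Prop :=
  D' = D.del (B.verts \ {x}) ∧
  (∀ k : Fin s, ∀ v ∈ D'.verts, v ≠ x → F' k v = F k v) ∧
  ((∃ c : Fin s, MonoHardEndBlock F B x c ∧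
      F' c x = ((F c x).1 - B.inDeg x, (F c x).2 - B.outDeg x) ∧
      ∀ k : Fin s, k ≠ c → F' k x = F k x) ∨
   ((¬ ∃ c : Fin s, MonoHardEndBlock F B x c) ∧
      ∀ k : Fin s, F' k x = ((F k x).1 - (F k u).1, (F k x).2 - (F k u).2)))

/-- Property (E): all the functions exceed `1` in the relevant coordinate at every vertex
having an in-(resp. out-)neighbour. -/
def PropE (D : Digraph') {s : ℕ} (F : Fin s → ℕ → ℕ × ℕ) : Prop :=
  ∀ x ∈ D.verts, ∀ c : Fin s,
    (0 < D.inDeg x → 1 ≤ (F c x).1) ∧ (0 < D.outDeg x → 1 ≤ (F c x).2)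

/-- `C` is a directed cycle: connected, and every vertex has in- and out-degree one. -/
def IsDirectedCycle (C : Digraph') : Prop :=
  C.Connected ∧ ∀ v ∈ C.verts, C.inDeg v = 1 ∧ C.outDeg v = 1

/-- `D` is acyclic: it contains no directed cycle. -/
def AcyclicD (D : Digraph') : Prop :=
  ¬ ∃ C : Digraph', C.IsSubdigraph D ∧ C.IsDirectedCycle

/-- `α` is a `k`-dicolouring of `D`: every colour class induces an acyclic subdigraph. -/
def IsKDicolouring (D : Digraph') (k : ℕ) (α : ℕ → Fin k) : Prop :=
  ∀ i : Fin k, AcyclicD (D.induce (D.verts.filter fun v => α v = i))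

/-- The dichromatic number of `D`. -/
noncomputable def dichromatic (D : Digraph') : ℕ :=
  sInf {k : ℕ | ∃ α : ℕ → Fin k, D.IsKDicolouring k α}

end Digraph'

open Digraph'

/-!
Failure of (E) gives an arc between vertices `x` and `z` such that some colour `c` has no budget
at `x` on the side of that arc. We may assume `F c z ≠ (0, 0)`: otherwise the zero set of `F c`
is nonempty, and it is not all of `V(D)` since tightness would then make the pair monochromatic
hard in the other colour, so an edge leaving it gives a new such pair `x, z`.

Now colour `z` with `c`, and then the vertices of the connected digraph `D - z` greedily along an
order ending at `x` in which every earlier vertex has a later neighbour. Such a neighbour is still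
uncoloured, so by validity some colour fits at each vertex before `x`; at `x` the arc with `z` is
charged to `c`, where `x` has no budget, so again some colour fits. A greedy colouring is an
`F`-dicolouring: in any monochromatic subdigraph its last-coloured vertex has small degree.
-/

theorem Relation.ReflTransGen.exists_rel_of_not {α : Type*} {r : α → α → Prop} {p : α → Prop}
    {a b : α} (hab : Relation.ReflTransGen r a b) (ha : p a) (hb : ¬ p b) :
    ∃ u v, p u ∧ ¬ p v ∧ r u v := by
  induction hab with
  | refl => exact absurd ha hb
  | @tail c d _ hcd ih => exact if hc : p c then ⟨c, d, hc, hb, hcd⟩ else ih hc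

theorem Finset.forall_mem_and_pos_of_card_le_sum {β ι : Type*} [DecidableEq β] [Fintype ι]
    [DecidableEq ι] {N S : Finset β} {α : β → ι} {g : ι → ℕ} (hN : N.card ≤ ∑ k, g k)
    (hg : ∀ k, g k ≤ ((N ∩ S).filter (α · = k)).card) : ∀ w ∈ N, w ∈ S ∧ 0 < g (α w) := by
  have hfib : (N ∩ S).card = ∑ k, ((N ∩ S).filter (α · = k)).card :=
    card_eq_sum_card_fiberwise fun _ _ => mem_coe.2 (mem_univ _)
  have hcard := card_le_card (inter_subset_left (s₁ := N) (s₂ := S))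
  have hsum : ∑ k, g k = ∑ k, ((N ∩ S).filter (α · = k)).card :=
    le_antisymm (sum_le_sum fun k _ => hg k) (by omega)
  have hgk := (sum_eq_sum_iff_of_le fun k _ => hg k).1 hsum
  have hNS : N ∩ S = N := eq_of_subset_of_card_le inter_subset_left (by omega)
  intro w hw
  rw [← hNS] at hw
  refine ⟨(mem_inter.1 hw).2, ?_⟩
  rw [hgk (α w) (mem_univ _)]
  exact card_pos.2 ⟨w, mem_filter.2 ⟨hw, rfl⟩⟩

namespace Digraph'

variable {D : Digraph'}

theorem mem_inNbrs {w v : ℕ} : w ∈ D.inNbrs v ↔ (w, v) ∈ D.arcs := by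
  simp [inNbrs]

theorem mem_outNbrs {w v : ℕ} : w ∈ D.outNbrs v ↔ (v, w) ∈ D.arcs := by
  simp [outNbrs]

theorem card_inNbrs (v : ℕ) : (D.inNbrs v).card = D.inDeg v :=
  Finset.card_image_of_injOn fun _ ha _ hb hab =>
    Prod.ext hab ((Finset.mem_filter.1 ha).2.trans (Finset.mem_filter.1 hb).2.symm)

theorem card_outNbrs (v : ℕ) : (D.outNbrs v).card = D.outDeg v :=
  Finset.card_image_of_injOn fun _ ha _ hb hab =>
    Prod.ext ((Finset.mem_filter.1 ha).2.trans (Finset.mem_filter.1 hb).2.symm) hab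

theorem IsSubdigraph.trans {H K : Digraph'} (hHK : H.IsSubdigraph K) (hKD : K.IsSubdigraph D) :
    H.IsSubdigraph D :=
  ⟨hHK.1.trans hKD.1, hHK.2.trans hKD.2⟩

theorem induce_isSubdigraph (X : Finset ℕ) : (D.induce X).IsSubdigraph D :=
  ⟨Finset.inter_subset_left, Finset.filter_subset _ _⟩

theorem ugAdj.symm {u v : ℕ} (h : D.ugAdj u v) : D.ugAdj v u :=
  ⟨h.2.1, h.1, h.2.2.symm⟩

theorem ugAdj.mono {H : Digraph'} (hH : H.IsSubdigraph D) {u v : ℕ} (h : H.ugAdj u v) :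
    D.ugAdj u v :=
  ⟨hH.1 h.1, hH.1 h.2.1, h.2.2.imp (@hH.2 _) (@hH.2 _)⟩

variable (D) in
def HasLaterNbrs (L : List ℕ) : Prop :=
  ∀ l₁ v l₂, L = l₁ ++ v :: l₂ → l₂ ≠ [] → ∃ u ∈ l₂, D.ugAdj v u

theorem HasLaterNbrs.mono {H : Digraph'} (hH : H.IsSubdigraph D) {L : List ℕ}
    (hL : H.HasLaterNbrs L) : D.HasLaterNbrs L := fun l₁ v l₂ h hl₂ =>
  (hL l₁ v l₂ h hl₂).imp fun _ hu => ⟨hu.1, hu.2.mono hH⟩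

theorem HasLaterNbrs.cons {L : List ℕ} (hL : D.HasLaterNbrs L) {a b : ℕ} (ha : a ∈ L)
    (hba : D.ugAdj b a) : D.HasLaterNbrs (b :: L) := by
  rintro (_ | ⟨w, l₁⟩) v l₂ h hl₂
  · obtain ⟨rfl, rfl⟩ := List.cons_eq_cons.1 h
    exact ⟨a, ha, hba⟩
  · exact hL l₁ v l₂ (List.cons_eq_cons.1 h).2 hl₂

theorem Connected.exists_append_hasLaterNbrs (hD : D.Connected) (L : List ℕ) (hne : L ≠ [])
    (hnd : L.Nodup) (hL : D.HasLaterNbrs L) (hLD : ∀ v ∈ L, v ∈ D.verts) :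
    ∃ M : List ℕ, (M ++ L).Nodup ∧ D.HasLaterNbrs (M ++ L) ∧ (M ++ L).toFinset = D.verts := by
  by_cases hcov : D.verts ⊆ L.toFinset
  · exact ⟨[], hnd, hL, subset_antisymm (fun v hv => hLD v (List.mem_toFinset.1 hv)) hcov⟩
  obtain ⟨v, hv, hvL⟩ := Finset.not_subset.1 hcov
  obtain ⟨u, hu⟩ := List.exists_mem_of_ne_nil L hne
  obtain ⟨a, b, ha, hb, hab⟩ := (hD.2 u (hLD u hu) v hv).exists_rel_of_not (p := (· ∈ L)) hu
    (fun h => hvL (List.mem_toFinset.2 h))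
  have hdecr : (D.verts \ (b :: L).toFinset).card < (D.verts \ L.toFinset).card := by
    rw [List.toFinset_cons, Finset.sdiff_insert]
    exact Finset.card_erase_lt_of_mem (Finset.mem_sdiff.2 ⟨hab.2.1, mt List.mem_toFinset.1 hb⟩)
  obtain ⟨M, hM⟩ := hD.exists_append_hasLaterNbrs (b :: L) (List.cons_ne_nil _ _)
    (List.nodup_cons.2 ⟨hb, hnd⟩) (hL.cons ha hab.symm)
    (fun w hw => (List.mem_cons.1 hw).elim (· ▸ hab.2.1) (hLD w))
  exact ⟨M ++ [b], by simpa using hM⟩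
termination_by (D.verts \ L.toFinset).card
decreasing_by simpa using hdecr

theorem Connected.exists_hasLaterNbrs_append_singleton (hD : D.Connected) {x : ℕ}
    (hx : x ∈ D.verts) :
    ∃ M : List ℕ, (M ++ [x]).Nodup ∧ D.HasLaterNbrs (M ++ [x]) ∧ (M ++ [x]).toFinset = D.verts :=
  hD.exists_append_hasLaterNbrs [x] (List.cons_ne_nil _ _) (List.nodup_singleton x)
    (fun l₁ _ _ h hl₂ => by cases l₁ <;> simp_all) (by simpa using hx)

variable {s : ℕ} (D) (F : Fin s → ℕ → ℕ × ℕ) (α : ℕ → Fin s)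

/-- Colour `k` still fits at `v` when the vertices of `S` are already coloured by `α`. -/
def HasRoom (S : Finset ℕ) (v : ℕ) (k : Fin s) : Prop :=
  ((D.inNbrs v ∩ S).filter (α · = k)).card < (F k v).1 ∨
    ((D.outNbrs v ∩ S).filter (α · = k)).card < (F k v).2

/-- Colouring the vertices of `L` in order, after those of `S`, each one gets under `α` a colour
that still fits. -/
def IsGreedyColouring : List ℕ → Finset ℕ → Prop
  | [], _ => True
  | v :: L, S => D.HasRoom F α S v (α v) ∧ IsGreedyColouring L (insert v S)

variable {D F α}

theorem hasRoom_congr {β : ℕ → Fin s} {S : Finset ℕ} {v : ℕ} {k : Fin s}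
    (h : ∀ w ∈ S, α w = β w) : D.HasRoom F α S v k ↔ D.HasRoom F β S v k := by
  have hfilter (N : Finset ℕ) : (N ∩ S).filter (α · = k) = (N ∩ S).filter (β · = k) :=
    Finset.filter_congr fun w hw => by rw [h w (Finset.mem_inter.1 hw).2]
  simp only [HasRoom, hfilter]

theorem inDeg_le_card_filter {H : Digraph'} (hH : H.IsSubdigraph D) {S : Finset ℕ} {v : ℕ}
    {i : Fin s} (hS : ∀ u ∈ H.verts, u ≠ v → u ∈ S ∧ α u = i) :
    H.inDeg v ≤ ((D.inNbrs v ∩ S).filter (α · = i)).card := by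
  rw [← card_inNbrs]
  refine Finset.card_le_card fun u hu => ?_
  have huv := mem_inNbrs.1 hu
  obtain ⟨huS, hui⟩ := hS u (H.mem_fst _ huv) (H.no_loops _ huv)
  exact Finset.mem_filter.2 ⟨Finset.mem_inter.2 ⟨mem_inNbrs.2 (hH.2 huv), huS⟩, hui⟩

theorem outDeg_le_card_filter {H : Digraph'} (hH : H.IsSubdigraph D) {S : Finset ℕ} {v : ℕ}
    {i : Fin s} (hS : ∀ u ∈ H.verts, u ≠ v → u ∈ S ∧ α u = i) :
    H.outDeg v ≤ ((D.outNbrs v ∩ S).filter (α · = i)).card := by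
  rw [← card_outNbrs]
  refine Finset.card_le_card fun u hu => ?_
  have hvu := mem_outNbrs.1 hu
  obtain ⟨huS, hui⟩ := hS u (H.mem_snd _ hvu) (H.no_loops _ hvu).symm
  exact Finset.mem_filter.2 ⟨Finset.mem_inter.2 ⟨mem_outNbrs.2 (hH.2 hvu), huS⟩, hui⟩

theorem IsGreedyColouring.exists_lt {L : List ℕ} {S : Finset ℕ}
    (hL : D.IsGreedyColouring F α L S) {H : Digraph'} (hH : H.IsSubdigraph D) {i : Fin s}
    (hcol : ∀ w ∈ H.verts, (w ∈ S ∨ w ∈ L) ∧ α w = i) (hmeet : ∃ w ∈ H.verts, w ∈ L) :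
    ∃ v ∈ H.verts, H.inDeg v < (F i v).1 ∨ H.outDeg v < (F i v).2 := by
  induction L generalizing S with
  | nil => simp at hmeet
  | cons v L ih =>
    by_cases hlater : ∃ w ∈ H.verts, w ∈ L
    · refine ih hL.2 (fun w hw => ?_) hlater
      obtain ⟨hw', hwi⟩ := hcol w hw
      simp only [List.mem_cons, Finset.mem_insert] at hw' ⊢
      exact ⟨by tauto, hwi⟩
    · push Not at hlater
      obtain ⟨w, hw, hwL⟩ := hmeet
      obtain rfl : w = v := (List.mem_cons.1 hwL).resolve_right (hlater w hw)
      have hS : ∀ u ∈ H.verts, u ≠ w → u ∈ S ∧ α u = i := fun u hu huw => by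
        obtain ⟨hu', hui⟩ := hcol u hu
        simp only [List.mem_cons] at hu'
        exact ⟨by tauto, hui⟩
      have hroom := hL.1
      rw [(hcol w hw).2] at hroom
      exact ⟨w, hw, hroom.imp (lt_of_le_of_lt (inDeg_le_card_filter hH hS))
        (lt_of_le_of_lt (outDeg_le_card_filter hH hS))⟩

theorem isDicolouring_of_isGreedyColouring {L : List ℕ} (hcover : L.toFinset = D.verts)
    (hL : D.IsGreedyColouring F α L ∅) : D.IsDicolouring s F α := by
  intro i H hH ⟨w, hw⟩
  have hcol : ∀ u ∈ H.verts, (u ∈ (∅ : Finset ℕ) ∨ u ∈ L) ∧ α u = i := fun u hu => by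
    have := hH.1 hu
    simp only [induce, Finset.mem_inter, Finset.mem_filter] at this
    exact ⟨Or.inr (List.mem_toFinset.1 (hcover ▸ this.1)), this.2.2⟩
  exact hL.exists_lt (hH.trans (induce_isSubdigraph _)) hcol ⟨w, hw, (hcol w hw).1.resolve_left
    (Finset.notMem_empty w)⟩

/-- Pigeonhole: the budgets at `v` add up to at least its degrees. -/
theorem forall_nbrs_of_forall_not_hasRoom {S : Finset ℕ} {v : ℕ}
    (hin : D.inDeg v ≤ ∑ k, (F k v).1) (hout : D.outDeg v ≤ ∑ k, (F k v).2)
    (h : ∀ k, ¬ D.HasRoom F α S v k) :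
    (∀ w ∈ D.inNbrs v, w ∈ S ∧ 0 < (F (α w) v).1) ∧
      (∀ w ∈ D.outNbrs v, w ∈ S ∧ 0 < (F (α w) v).2) := by
  simp only [HasRoom, not_or, not_lt] at h
  exact ⟨Finset.forall_mem_and_pos_of_card_le_sum (g := fun k => (F k v).1)
      (card_inNbrs v ▸ hin) fun k => (h k).1,
    Finset.forall_mem_and_pos_of_card_le_sum (g := fun k => (F k v).2)
      (card_outNbrs v ▸ hout) fun k => (h k).2⟩

theorem exists_hasRoom_of_ugAdj {S : Finset ℕ} {v w : ℕ} (hin : D.inDeg v ≤ ∑ k, (F k v).1)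
    (hout : D.outDeg v ≤ ∑ k, (F k v).2) (hvw : D.ugAdj v w) (hw : w ∉ S) :
    ∃ k, D.HasRoom F α S v k := by
  by_contra! h
  have hsat := forall_nbrs_of_forall_not_hasRoom hin hout h
  rcases hvw.2.2 with hvw | hwv
  · exact hw (hsat.2 w (mem_outNbrs.2 hvw)).1
  · exact hw (hsat.1 w (mem_inNbrs.2 hwv)).1

theorem exists_hasRoom_of_hasLaterNbrs {L l₁ l₂ : List ℕ} {S : Finset ℕ} {v : ℕ}
    (hin : D.inDeg v ≤ ∑ k, (F k v).1) (hout : D.outDeg v ≤ ∑ k, (F k v).2) (hnd : L.Nodup)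
    (hL : D.HasLaterNbrs L) (hLS : ∀ u ∈ L, u ∉ S) (hsplit : L = l₁ ++ v :: l₂) (hl₂ : l₂ ≠ []) :
    ∃ k, D.HasRoom F α (S ∪ l₁.toFinset) v k := by
  obtain ⟨w, hw, hvw⟩ := hL l₁ v l₂ hsplit hl₂
  refine exists_hasRoom_of_ugAdj hin hout hvw ?_
  have hwS := hLS w (hsplit ▸ by simp [hw])
  have hwl₁ : w ∉ l₁ := fun hwl₁ => by
    rw [hsplit, List.nodup_append] at hnd
    exact hnd.2.2 w hwl₁ w (List.mem_cons_of_mem v hw) rfl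
  simp [hwS, hwl₁]

theorem exists_hasRoom_of_budget_eq_zero {S : Finset ℕ} {v z : ℕ}
    (hin : D.inDeg v ≤ ∑ k, (F k v).1) (hout : D.outDeg v ≤ ∑ k, (F k v).2)
    (hzv : (z ∈ D.inNbrs v ∧ (F (α z) v).1 = 0) ∨ (z ∈ D.outNbrs v ∧ (F (α z) v).2 = 0)) :
    ∃ k, D.HasRoom F α S v k := by
  by_contra! h
  have hsat := forall_nbrs_of_forall_not_hasRoom hin hout h
  rcases hzv with ⟨hz, h0⟩ | ⟨hz, h0⟩
  · exact (hsat.1 z hz).2.ne' h0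
  · exact (hsat.2 z hz).2.ne' h0

theorem exists_isGreedyColouring {L : List ℕ} {S : Finset ℕ} (hnd : L.Nodup)
    (hdisj : ∀ v ∈ L, v ∉ S) (α₀ : ℕ → Fin s)
    (hroom : ∀ l₁ v l₂, L = l₁ ++ v :: l₂ → ∀ α : ℕ → Fin s, (∀ w ∈ S, α w = α₀ w) →
      ∃ k, D.HasRoom F α (S ∪ l₁.toFinset) v k) :
    ∃ α : ℕ → Fin s, (∀ w ∈ S, α w = α₀ w) ∧ D.IsGreedyColouring F α L S := by
  induction L generalizing S α₀ with
  | nil => exact ⟨α₀, fun _ _ => rfl, trivial⟩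
  | cons v L ih =>
    obtain ⟨hvL, hnd⟩ := List.nodup_cons.1 hnd
    have hvS : v ∉ S := hdisj v List.mem_cons_self
    obtain ⟨k, hk⟩ := hroom [] v L rfl α₀ fun _ _ => rfl
    set α₁ := Function.update α₀ v k
    have hα₁ : ∀ w ∈ S, α₁ w = α₀ w := fun w hw =>
      Function.update_of_ne (ne_of_mem_of_not_mem hw hvS) _ _
    obtain ⟨α, hα, hgreedy⟩ := ih (S := insert v S) hnd
      (fun w hw hwS => (Finset.mem_insert.1 hwS).elim (fun h => hvL (h ▸ hw))
        (hdisj w (List.mem_cons_of_mem v hw))) α₁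
      (fun l₁ w l₂ hL β hβ => by
        have := hroom (v :: l₁) w l₂ (by rw [hL, List.cons_append]) β fun u hu => by
          rw [hβ u (Finset.mem_insert_of_mem hu), hα₁ u hu]
        rwa [List.toFinset_cons, Finset.union_insert, ← Finset.insert_union] at this)
    have hαv : α v = k := (hα v (Finset.mem_insert_self v S)).trans (Function.update_self _ _ _)
    refine ⟨α, fun w hw => by rw [hα w (Finset.mem_insert_of_mem hw), hα₁ w hw], ?_, hgreedy⟩
    rw [hαv]
    rw [List.toFinset_nil, Finset.union_empty] at hk
    exact (hasRoom_congr fun w hw => by rw [hα w (Finset.mem_insert_of_mem hw), hα₁ w hw]).2 hk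

theorem dicolourable_of_nbr_of_budget_eq_zero
    (hdeg : ∀ v ∈ D.verts, D.inDeg v ≤ ∑ k, (F k v).1 ∧ D.outDeg v ≤ ∑ k, (F k v).2)
    {x z : ℕ} {c : Fin s} (hconn : (D.del {z}).Connected) (hFz : F c z ≠ (0, 0))
    (hzx : (z ∈ D.inNbrs x ∧ (F c x).1 = 0) ∨ (z ∈ D.outNbrs x ∧ (F c x).2 = 0)) :
    D.Dicolourable s F := by
  have harc : (z, x) ∈ D.arcs ∨ (x, z) ∈ D.arcs :=
    hzx.imp (fun h => mem_inNbrs.1 h.1) (fun h => mem_outNbrs.1 h.1)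
  have hz : z ∈ D.verts := harc.elim (D.mem_fst _) (D.mem_snd _)
  have hx : x ∈ (D.del {z}).verts := by
    have hxz : x ≠ z := harc.elim (fun h => (D.no_loops _ h).symm) (D.no_loops _)
    have hxD : x ∈ D.verts := harc.elim (D.mem_snd _) (D.mem_fst _)
    simp [del, induce, hxz, hxD]
  obtain ⟨M, hnd, hlater, hcover⟩ := hconn.exists_hasLaterNbrs_append_singleton hx
  have hmem : ∀ v ∈ M ++ [x], v ∈ D.verts ∧ v ≠ z := fun v hv => by
    have := hcover ▸ List.mem_toFinset.2 hv
    simpa [del, induce] using this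
  have hzM : ∀ v ∈ M ++ [x], v ∉ ({z} : Finset ℕ) := fun v hv => by simpa using (hmem v hv).2
  have hroom : ∀ l₁ v l₂, M ++ [x] = l₁ ++ v :: l₂ → ∀ β : ℕ → Fin s, (∀ w ∈ ({z} : Finset ℕ),
      β w = c) → ∃ k, D.HasRoom F β ({z} ∪ l₁.toFinset) v k := by
    intro l₁ v l₂ hsplit β hβ
    obtain ⟨hin, hout⟩ := hdeg v (hmem v (hsplit ▸ by simp)).1
    rcases eq_or_ne l₂ [] with rfl | hl₂
    · obtain rfl : v = x := by simpa using (congrArg List.getLast? hsplit).symm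
      refine exists_hasRoom_of_budget_eq_zero (z := z) hin hout ?_
      rwa [hβ z (Finset.mem_singleton_self z)]
    · exact exists_hasRoom_of_hasLaterNbrs hin hout hnd (hlater.mono (induce_isSubdigraph _)) hzM
        hsplit hl₂
  obtain ⟨α, hαz, hgreedy⟩ := exists_isGreedyColouring hnd hzM (fun _ => c) hroom
  refine ⟨α, isDicolouring_of_isGreedyColouring (L := z :: (M ++ [x])) ?_ ⟨?_, hgreedy⟩⟩
  · ext v
    by_cases hvz : v = z <;> simp [hcover, del, induce, hvz, hz]
  · rw [hαz z (Finset.mem_singleton_self z)]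
    simpa [HasRoom, Nat.pos_iff_ne_zero, Prod.ext_iff, ← not_and_or] using hFz

theorem dicolourable_of_budget_eq_zero_of_ne_zero
    (hdeg : ∀ v ∈ D.verts, D.inDeg v ≤ ∑ k, (F k v).1 ∧ D.outDeg v ≤ ∑ k, (F k v).2)
    (hbi : D.Biconnected) {c : Fin s} {a b : ℕ} (ha : a ∈ D.verts) (hFa : F c a = (0, 0))
    (hb : b ∈ D.verts) (hFb : F c b ≠ (0, 0)) : D.Dicolourable s F := by
  obtain ⟨x, z, hFx, hFz, hxz⟩ := (hbi.2.1.2 a ha b hb).exists_rel_of_not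
    (p := fun v => F c v = (0, 0)) hFa hFb
  refine dicolourable_of_nbr_of_budget_eq_zero (x := x) hdeg (hbi.2.2 z hxz.2.1) hFz ?_
  rcases hxz.2.2 with hxz | hzx
  · exact Or.inr ⟨mem_outNbrs.2 hxz, by rw [hFx]⟩
  · exact Or.inl ⟨mem_inNbrs.2 hzx, by rw [hFx]⟩

theorem isHardPair_of_budget_eq_zero (htight : D.Tight s F) (hbi : D.Biconnected) (i : Fin s)
    (h0 : ∀ k ≠ i, ∀ v ∈ D.verts, F k v = (0, 0)) : IsHardPair s D F := by
  refine .mono i hbi (fun v hv => ?_) h0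
  have hsum (g : ℕ × ℕ → ℕ) (hg : g (0, 0) = 0) : ∑ k, g (F k v) = g (F i v) :=
    Finset.sum_eq_single i (fun k _ hk => by rw [h0 k hk v hv, hg]) (by simp)
  obtain ⟨hin, hout⟩ := htight v hv
  rw [← hin, ← hout, hsum Prod.fst rfl, hsum Prod.snd rfl]

theorem exists_nbr_budget_eq_zero_of_not_propE (hE : ¬ D.PropE F) :
    ∃ c x z, z ∈ D.verts ∧
      ((z ∈ D.inNbrs x ∧ (F c x).1 = 0) ∨ (z ∈ D.outNbrs x ∧ (F c x).2 = 0)) := by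
  simp only [PropE, not_forall, not_and_or, not_le, Nat.lt_one_iff] at hE
  obtain ⟨x, -, c, ⟨hpos, h0⟩ | ⟨hpos, h0⟩⟩ := hE
  · obtain ⟨z, hz⟩ := Finset.card_pos.1 (card_inNbrs x ▸ hpos)
    exact ⟨c, x, z, D.mem_fst _ (mem_inNbrs.1 hz), Or.inl ⟨hz, h0⟩⟩
  · obtain ⟨z, hz⟩ := Finset.card_pos.1 (card_outNbrs x ▸ hpos)
    exact ⟨c, x, z, D.mem_snd _ (mem_outNbrs.1 hz), Or.inr ⟨hz, h0⟩⟩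

end Digraph'

/-- **Lemma.** Let `(D,F=(f₁,f₂))` be a valid tight non-hard pair with `D` biconnected.
If the pair does not satisfy property (E), then `D` is `F`-dicolourable. -/
theorem not_propE_dicolourable
    (D : Digraph') (F : Fin 2 → ℕ → ℕ × ℕ)
    (hvalid : D.ValidPair 2 F) (htight : D.Tight 2 F)
    (hnothard : ¬ IsHardPair 2 D F) (hbi : D.Biconnected)
    (hE : ¬ D.PropE F) :
    D.Dicolourable 2 F := by
  obtain ⟨c, x, z, hz, hzx⟩ := exists_nbr_budget_eq_zero_of_not_propE hE
  obtain ⟨b, hb, hFb⟩ : ∃ b ∈ D.verts, F c b ≠ (0, 0) := by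
    by_contra! hall
    obtain ⟨i, hi⟩ : ∃ i : Fin 2, ∀ k, k ≠ i → k = c :=
      ⟨c.rev, fun k => by fin_cases c <;> fin_cases k <;> simp⟩
    exact hnothard (isHardPair_of_budget_eq_zero htight hbi i fun k hk => hi k hk ▸ hall)
  by_cases hFz : F c z = (0, 0)
  · exact dicolourable_of_budget_eq_zero_of_ne_zero hvalid.2 hbi hz hFz hb hFb
  · exact dicolourable_of_nbr_of_budget_eq_zero hvalid.2 (hbi.2.2 z hz) hFz hzx
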